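/- Let g = 2 and let B be the positive definite symmetric bilinear form on ℝ² with matrix r₁·[[1,0],[0,1]] + r₂·[[0,0],[0,1]] + r₃·[[1,1],[1,1]], where r₁, r₂, r₃ > 0. Then the 2-dimensional Delaunay cells of B are exactly the ℤ²-translates of the two triangles σ₃ = conv{0, s₁, s₂} and σ₄ = conv{s₁, s₂, s₁+s₂}. -/

import Mathlib

/-!
The form is `Q(x) = r₁ x₀² + (r₁ + r₂) x₁² + r₃ (x₀ + x₁)² = Σ cᵢ ℓᵢ(x)²`, a positive combination
of the squares of the three linear forms `ℓᵢ = x₀, x₁, x₀ + x₁`. If `p` and `q` are both lattice points nearest to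
`α`, then for every lattice splitting `p - q = u + w` the points `q + u` and `q + w` are no nearer,
and the parallelogram law gives `B(u, w) ≤ 0`. A few choices of `u` force each of the three forms
to change by at most one between nearest points, so the nearest points lie in a translate of one of
the two triangles, and a cell spanning the plane must contain all three vertices. Conversely, if
`2 B(sᵢ, α) = Q(sᵢ)` then `Q(b - α) - Q(α) = Σ cᵢ ℓᵢ(b) (ℓᵢ(b) - 1)`, which is nonnegative on the
lattice and vanishes exactly at `0, s₁, s₂`; the other triangle is the point reflection of this one.
-/

open Matrix Set

noncomputable section

/-- The standard lattice `ℤ^g` sitting inside `ℝ^g`. -/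
def latticePts (g : ℕ) : Set (Fin g → ℝ) :=
  Set.range (fun a : Fin g → ℤ => fun i => (a i : ℝ))

/-- `σ` is a (closed) Delaunay cell of the bilinear form `B`: there is an `α ∈ ℝ^g`
such that `σ` is the convex hull of the lattice points nearest to `α`
(with respect to the distance defined by `B`). -/
def IsDelaunayCell {g : ℕ} (B : (Fin g → ℝ) → (Fin g → ℝ) → ℝ)
    (σ : Set (Fin g → ℝ)) : Prop :=
  ∃ α : Fin g → ℝ, σ = convexHull ℝ
    {a | a ∈ latticePts g ∧ ∀ b ∈ latticePts g, B (a - α) (a - α) ≤ B (b - α) (b - α)}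

/-- `C(0,S)`: the cone generated by `S` over the nonnegative reals. -/
def cone0 {g : ℕ} (S : Set (Fin g → ℝ)) : Set (Fin g → ℝ) :=
  {x | ∃ r : ℝ, 0 ≤ r ∧ ∃ y ∈ convexHull ℝ S, x = r • y}

/-- `Semi(0, S ∩ ℤ^g)`: the additive submonoid generated by the lattice points of `S`. -/
def semi0 {g : ℕ} (S : Set (Fin g → ℝ)) : Set (Fin g → ℝ) :=
  (AddSubmonoid.closure (S ∩ latticePts g) : AddSubmonoid (Fin g → ℝ))

/-- The standard basis vector `s_i` of `ℝ^g`. -/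
def stdV (g : ℕ) (i : Fin g) : Fin g → ℝ := Pi.single i 1

/-- Translation of a subset of `ℝ^g` by a lattice vector `v ∈ ℤ^g`. -/
def zTrans {g : ℕ} (v : Fin g → ℤ) (S : Set (Fin g → ℝ)) : Set (Fin g → ℝ) :=
  (fun x => (fun i => (v i : ℝ)) + x) '' S

open scoped Pointwise

section Lattice

variable {g : ℕ}

def castVec : (Fin g → ℤ) →+ (Fin g → ℝ) := (Int.castAddHom ℝ).compLeft (Fin g)

@[simp]
lemma castVec_apply (p : Fin g → ℤ) (i : Fin g) : castVec p i = p i := rfl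

lemma castVec_single (i : Fin g) : castVec (Pi.single i 1) = stdV g i := by
  ext j
  by_cases h : j = i
  · subst h; simp [stdV]
  · simp [stdV, h]

lemma zTrans_eq_vadd (v : Fin g → ℤ) (S : Set (Fin g → ℝ)) : zTrans v S = castVec v +ᵥ S := by
  rw [← image_vadd]; rfl

lemma zTrans_convexHull_castVec_image (v : Fin g → ℤ) (T : Set (Fin g → ℤ)) :
    zTrans v (convexHull ℝ (castVec '' T)) = convexHull ℝ (castVec '' ((v + ·) '' T)) := by
  rw [zTrans_eq_vadd, ← convexHull_vadd, image_image, ← image_vadd, image_image]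
  simp only [map_add, vadd_eq_add]

def nearestPts (M : Matrix (Fin g) (Fin g) ℝ) (α : Fin g → ℝ) : Set (Fin g → ℤ) :=
  {p | ∀ q : Fin g → ℤ, (castVec p - α) ⬝ᵥ M *ᵥ (castVec p - α) ≤
    (castVec q - α) ⬝ᵥ M *ᵥ (castVec q - α)}

lemma isDelaunayCell_iff (M : Matrix (Fin g) (Fin g) ℝ) (σ : Set (Fin g → ℝ)) :
    IsDelaunayCell (fun x y => x ⬝ᵥ M *ᵥ y) σ ↔
      ∃ α, σ = convexHull ℝ (castVec '' nearestPts M α) := by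
  unfold IsDelaunayCell
  congr! with α
  ext a
  simp only [latticePts, nearestPts, mem_ofPred_eq, mem_image, forall_mem_range]
  constructor
  · rintro ⟨⟨p, rfl⟩, h⟩
    exact ⟨p, h, rfl⟩
  · rintro ⟨p, h, rfl⟩
    exact ⟨⟨p, rfl⟩, h⟩

lemma nearestPts_castVec_add (M : Matrix (Fin g) (Fin g) ℝ) (v : Fin g → ℤ) (α : Fin g → ℝ) :
    nearestPts M (castVec v + α) = (v + ·) '' nearestPts M α := by
  have shift (p : Fin g → ℤ) : castVec p - (castVec v + α) = castVec (-v + p) - α := by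
    simp only [map_add, map_neg]; abel
  ext p
  rw [image_add_left]
  simp only [nearestPts, mem_ofPred_eq, mem_preimage, shift]
  exact ⟨fun h q => by simpa using h (v + q), fun h q => h _⟩

lemma nearestPts_castVec_sub (M : Matrix (Fin g) (Fin g) ℝ) (w : Fin g → ℤ) (α : Fin g → ℝ) :
    nearestPts M (castVec w - α) = (w - ·) ⁻¹' nearestPts M α := by
  have flip (p : Fin g → ℤ) : castVec p - (castVec w - α) = -(castVec (w - p) - α) := by
    simp only [map_sub]; abel
  ext p
  simp only [nearestPts, mem_ofPred_eq, mem_preimage, flip, neg_dotProduct, mulVec_neg,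
    dotProduct_neg, neg_neg]
  exact ⟨fun h q => by simpa using h (w - q), fun h q => h _⟩

end Lattice

section QuadraticForm

variable {g : ℕ} {M : Matrix (Fin g) (Fin g) ℝ}

lemma dotProduct_mulVec_comm (hM : M.IsSymm) (x y : Fin g → ℝ) :
    x ⬝ᵥ M *ᵥ y = y ⬝ᵥ M *ᵥ x := by
  rw [dotProduct_mulVec, ← mulVec_transpose, hM.eq, dotProduct_comm]

lemma add_dotProduct_mulVec_add (hM : M.IsSymm) (x y : Fin g → ℝ) :
    (x + y) ⬝ᵥ M *ᵥ (x + y) = x ⬝ᵥ M *ᵥ x + 2 * (x ⬝ᵥ M *ᵥ y) + y ⬝ᵥ M *ᵥ y := by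
  rw [mulVec_add, add_dotProduct, dotProduct_add, dotProduct_add, dotProduct_mulVec_comm hM y x]
  ring

lemma parallelogram_dotProduct_mulVec (hM : M.IsSymm) (x u w : Fin g → ℝ) :
    (x + u) ⬝ᵥ M *ᵥ (x + u) + (x + w) ⬝ᵥ M *ᵥ (x + w) - x ⬝ᵥ M *ᵥ x
      - (x + u + w) ⬝ᵥ M *ᵥ (x + u + w) = -2 * (u ⬝ᵥ M *ᵥ w) := by
  rw [add_assoc, add_dotProduct_mulVec_add hM x (u + w), add_dotProduct_mulVec_add hM u w,
    add_dotProduct_mulVec_add hM, add_dotProduct_mulVec_add hM, mulVec_add, dotProduct_add]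
  ring

lemma dotProduct_mulVec_nonpos_of_mem_nearestPts (hM : M.IsSymm) {α : Fin g → ℝ}
    {p q : Fin g → ℤ} (hp : p ∈ nearestPts M α) (hq : q ∈ nearestPts M α) (u : Fin g → ℤ) :
    castVec u ⬝ᵥ M *ᵥ castVec (p - q - u) ≤ 0 := by
  set x := castVec q - α
  set w := p - q - u
  have hxu : castVec (q + u) - α = x + castVec u := by rw [map_add]; simp only [x]; abel
  have hxw : castVec (q + w) - α = x + castVec w := by rw [map_add]; simp only [x]; abel
  have hxuw : castVec p - α = x + castVec u + castVec w := by
    simp only [x, w, map_sub]; abel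
  have hu := hq (q + u)
  have hw := hp (q + w)
  rw [hxu] at hu
  rw [hxw, hxuw] at hw
  linarith [parallelogram_dotProduct_mulVec hM x (castVec u) (castVec w)]

end QuadraticForm

section AffineSpan

variable {k V P : Type*} [DivisionRing k] [AddCommGroup V] [Module k V] [AddTorsor V P]
  [FiniteDimensional k V]

lemma affineSpan_ne_top_of_collinear (hV : 1 < Module.finrank k V) {s : Set P}
    (hs : Collinear k s) : affineSpan k s ≠ ⊤ := by
  intro htop
  have := collinear_iff_finrank_le_one.1 hs
  rw [AffineSubspace.vectorSpan_eq_top_of_affineSpan_eq_top k V P htop, finrank_top] at this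
  omega

lemma eq_of_subset_triple_of_affineSpan_eq_top (hV : 1 < Module.finrank k V) {s : Set P}
    {a b c : P} (hs : s ⊆ {a, b, c}) (h : affineSpan k s = ⊤) : s = {a, b, c} := by
  refine hs.antisymm ?_
  have avoid {x y z : P} (hsub : s ⊆ {x, y, z}) (hx : x ∉ s) : Collinear k s :=
    (collinear_pair k y z).subset fun p hp => (hsub hp).resolve_left (by rintro rfl; exact hx hp)
  rintro x (rfl | rfl | rfl) <;> by_contra hx <;> refine affineSpan_ne_top_of_collinear hV ?_ h
  · exact avoid hs hx
  · exact avoid (hs.trans (by intro p; simp only [mem_insert_iff, mem_singleton_iff]; tauto)) hx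
  · exact avoid (hs.trans (by intro p; simp only [mem_insert_iff, mem_singleton_iff]; tauto)) hx

end AffineSpan

lemma affineSpan_castVec_image_translate_eq_top {g : ℕ} (v : Fin g → ℤ) {T : Set (Fin g → ℤ)}
    (hT : T.Nonempty) (h : ∀ i, ∃ p ∈ T, ∃ q ∈ T, p - q = Pi.single i 1) :
    affineSpan ℝ (castVec '' ((v + ·) '' T)) = ⊤ := by
  rw [AffineSubspace.affineSpan_eq_top_iff_vectorSpan_eq_top_of_nonempty ℝ _ _
      ((hT.image _).image _), eq_top_iff, ← (Pi.basisFun ℝ (Fin g)).span_eq, Submodule.span_le]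
  rintro _ ⟨i, rfl⟩
  obtain ⟨p, hp, q, hq, hpq⟩ := h i
  have := vsub_mem_vectorSpan ℝ (mem_image_of_mem castVec (mem_image_of_mem (v + ·) hp))
    (mem_image_of_mem castVec (mem_image_of_mem (v + ·) hq))
  rw [vsub_eq_sub, ← map_sub, add_sub_add_left_eq_sub, hpq, castVec_single] at this
  rwa [Pi.basisFun_apply]

section IntegerInequalities

lemma exists_forall_mem_Icc_of_abs_sub_le_one {ι : Type*} (f : ι → ℤ) {s : Set ι}
    (h : ∀ i ∈ s, ∀ j ∈ s, |f i - f j| ≤ 1) : ∃ m, ∀ i ∈ s, m ≤ f i ∧ f i ≤ m + 1 := by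
  rcases s.eq_empty_or_nonempty with rfl | ⟨i₀, hi₀⟩
  · exact ⟨0, by simp⟩
  by_cases hlow : ∃ j ∈ s, f j < f i₀
  · obtain ⟨j, hj, hlt⟩ := hlow
    refine ⟨f j, fun i hi => ?_⟩
    have := abs_le.1 (h i hi j hj)
    have := abs_le.1 (h i hi i₀ hi₀)
    omega
  · push Not at hlow
    refine ⟨f i₀, fun i hi => ?_⟩
    have := abs_le.1 (h i hi i₀ hi₀)
    exact ⟨hlow i hi, by omega⟩

lemma Int.cast_mul_sub_one_nonneg (t : ℤ) : (0 : ℝ) ≤ t * (t - 1) := by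
  have := Int.le_self_sq t
  exact_mod_cast (by nlinarith : (0 : ℤ) ≤ t * (t - 1))

variable {c₁ c₂ c₃ : ℝ}

/-- `Q(b - α) - Q(α)` when `α` is the circumcentre of `0, s₁, s₂`. -/
def triangleGap (c₁ c₂ c₃ : ℝ) (x y : ℤ) : ℝ :=
  c₁ * (x * (x - 1)) + c₂ * (y * (y - 1)) + c₃ * ((x + y) * (x + y - 1))

lemma triangleGap_nonneg (hc₁ : 0 ≤ c₁) (hc₂ : 0 ≤ c₂) (hc₃ : 0 ≤ c₃) (x y : ℤ) :
    0 ≤ triangleGap c₁ c₂ c₃ x y := by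
  have := Int.cast_mul_sub_one_nonneg (x + y)
  push_cast at this
  unfold triangleGap
  have := Int.cast_mul_sub_one_nonneg x
  have := Int.cast_mul_sub_one_nonneg y
  positivity

lemma Int.cast_mul_sub_one_nonpos_iff (t : ℤ) : (t : ℝ) * (t - 1) ≤ 0 ↔ 0 ≤ t ∧ t ≤ 1 := by
  constructor
  · intro h
    have : t * (t - 1) ≤ 0 := by exact_mod_cast h
    constructor <;> nlinarith
  · rintro ⟨h₀, h₁⟩
    have : (0 : ℝ) ≤ t := by exact_mod_cast h₀
    have : (t : ℝ) ≤ 1 := by exact_mod_cast h₁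
    nlinarith

lemma triangleGap_nonpos_iff (hc₁ : 0 < c₁) (hc₂ : 0 < c₂) (hc₃ : 0 < c₃) (x y : ℤ) :
    triangleGap c₁ c₂ c₃ x y ≤ 0 ↔ 0 ≤ x ∧ 0 ≤ y ∧ x + y ≤ 1 := by
  have hx := Int.cast_mul_sub_one_nonneg x
  have hy := Int.cast_mul_sub_one_nonneg y
  have hxy := Int.cast_mul_sub_one_nonneg (x + y)
  have hxy_iff := Int.cast_mul_sub_one_nonpos_iff (x + y)
  push_cast at hxy hxy_iff
  unfold triangleGap
  constructor
  · intro h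
    have t₁ := mul_nonneg hc₁.le hx
    have t₂ := mul_nonneg hc₂.le hy
    have t₃ := mul_nonneg hc₃.le hxy
    have ex := nonpos_of_mul_nonpos_right (show c₁ * ((x : ℝ) * (x - 1)) ≤ 0 by linarith) hc₁
    have ey := nonpos_of_mul_nonpos_right (show c₂ * ((y : ℝ) * (y - 1)) ≤ 0 by linarith) hc₂
    have exy :=
      nonpos_of_mul_nonpos_right (show c₃ * (((x : ℝ) + y) * (x + y - 1)) ≤ 0 by linarith) hc₃
    have := (Int.cast_mul_sub_one_nonpos_iff x).1 ex
    have := (Int.cast_mul_sub_one_nonpos_iff y).1 ey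
    have := hxy_iff.1 exy
    omega
  · rintro ⟨hx₀, hy₀, hxy₁⟩
    have ex := (Int.cast_mul_sub_one_nonpos_iff x).2 ⟨hx₀, by omega⟩
    have ey := (Int.cast_mul_sub_one_nonpos_iff y).2 ⟨hy₀, by omega⟩
    have exy := hxy_iff.2 ⟨by omega, hxy₁⟩
    nlinarith

lemma abs_le_one_of_mul_sub_one_nonpos {c : ℝ} (hc : 0 < c) {t : ℤ} (h₁ : c * (t - 1) ≤ 0)
    (h₂ : 0 ≤ c * (t + 1)) : |t| ≤ 1 := by
  have hle : (t : ℝ) - 1 ≤ 0 := nonpos_of_mul_nonpos_right h₁ hc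
  have hge : 0 ≤ (t : ℝ) + 1 := nonneg_of_mul_nonneg_right h₂ hc
  have : |(t : ℝ)| ≤ 1 := abs_le.2 ⟨by linarith, by linarith⟩
  exact_mod_cast this

lemma abs_le_one_of_forall_pairing_nonpos (hc₁ : 0 < c₁) (hc₂ : 0 < c₂) (hc₃ : 0 < c₃)
    {x y : ℤ} (h : ∀ a b : ℤ,
      c₁ * (a * (x - a)) + c₂ * (b * (y - b)) + c₃ * ((a + b) * (x + y - (a + b))) ≤ (0 : ℝ)) :
    |x| ≤ 1 ∧ |y| ≤ 1 ∧ |x + y| ≤ 1 := by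
  -- each of these three splittings kills two of the three terms
  have hxy : x * y ≤ 0 := by
    have : c₃ * ((x : ℝ) * y) ≤ 0 := by linear_combination h x 0
    exact_mod_cast nonpos_of_mul_nonpos_right this hc₃
  have hx : 0 ≤ x * (x + y) := by
    have : 0 ≤ c₂ * ((x : ℝ) * (x + y)) := by
      have := h x (-x); push_cast at this; linear_combination this
    exact_mod_cast nonneg_of_mul_nonneg_right this hc₂
  have hy : 0 ≤ y * (x + y) := by
    have : 0 ≤ c₁ * ((y : ℝ) * (x + y)) := by
      have := h (-y) y; push_cast at this; linear_combination this
    exact_mod_cast nonneg_of_mul_nonneg_right this hc₁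
  obtain h₀ | h₀ | h₀ : x = 0 ∨ y = 0 ∨ x + y = 0 := by
    by_contra! hne
    obtain ⟨hx₀, hy₀, hs₀⟩ := hne
    have hx' : 0 < x * (x + y) := hx.lt_of_ne' (mul_ne_zero hx₀ hs₀)
    have hy' : 0 < y * (x + y) := hy.lt_of_ne' (mul_ne_zero hy₀ hs₀)
    nlinarith [mul_pos hx' hy', mul_nonpos_of_nonpos_of_nonneg hxy (sq_nonneg (x + y))]
  · subst h₀
    have := abs_le_one_of_mul_sub_one_nonpos (add_pos hc₂ hc₃)
      (by linear_combination h 0 1) (by linear_combination h 0 (-1))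
    simpa using this
  · subst h₀
    have := abs_le_one_of_mul_sub_one_nonpos (add_pos hc₁ hc₃)
      (by linear_combination h 1 0) (by linear_combination h (-1) 0)
    simpa using this
  · obtain rfl : y = -x := by omega
    have := abs_le_one_of_mul_sub_one_nonpos (add_pos hc₁ hc₂) (t := x)
      (by have := h 1 (-1); push_cast at this; linear_combination this)
      (by have := h (-1) 1; push_cast at this; linear_combination this)
    simpa [abs_neg] using this

end IntegerInequalities

def triangle₃ : Set (Fin 2 → ℤ) := {0, Pi.single 0 1, Pi.single 1 1}

def triangle₄ : Set (Fin 2 → ℤ) := {Pi.single 0 1, Pi.single 1 1, Pi.single 0 1 + Pi.single 1 1}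

lemma mem_triangle₃_iff (p : Fin 2 → ℤ) : p ∈ triangle₃ ↔ 0 ≤ p 0 ∧ 0 ≤ p 1 ∧ p 0 + p 1 ≤ 1 := by
  simp only [triangle₃, mem_insert_iff, mem_singleton_iff, funext_iff, Fin.forall_fin_two,
    Pi.zero_apply, Pi.single_eq_same, Pi.single_eq_of_ne, ne_eq, one_ne_zero, zero_ne_one,
    not_false_eq_true]
  omega

lemma mem_triangle₄_iff (p : Fin 2 → ℤ) : p ∈ triangle₄ ↔ p 0 ≤ 1 ∧ p 1 ≤ 1 ∧ 1 ≤ p 0 + p 1 := by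
  simp only [triangle₄, mem_insert_iff, mem_singleton_iff, funext_iff, Fin.forall_fin_two,
    Pi.add_apply, Pi.single_eq_same, Pi.single_eq_of_ne, ne_eq, one_ne_zero, zero_ne_one,
    not_false_eq_true, add_zero, zero_add]
  omega

lemma triangle₄_eq_preimage : triangle₄ = (Pi.single 0 1 + Pi.single 1 1 - ·) ⁻¹' triangle₃ := by
  ext p
  simp only [mem_preimage, mem_triangle₃_iff, mem_triangle₄_iff, Pi.sub_apply, Pi.add_apply,
    Pi.single_eq_same, Pi.single_eq_of_ne, ne_eq, one_ne_zero, zero_ne_one, not_false_eq_true,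
    add_zero, zero_add]
  omega

lemma castVec_image_triangle₃ : castVec '' triangle₃ = {0, stdV 2 0, stdV 2 1} := by
  simp only [triangle₃, image_insert_eq, image_singleton, map_zero, castVec_single]

lemma castVec_image_triangle₄ :
    castVec '' triangle₄ = {stdV 2 0, stdV 2 1, stdV 2 0 + stdV 2 1} := by
  simp only [triangle₄, image_insert_eq, image_singleton, map_add, castVec_single]

lemma exists_subset_translate_triangle {S : Set (Fin 2 → ℤ)}
    (h : ∀ p ∈ S, ∀ q ∈ S, |p 0 - q 0| ≤ 1 ∧ |p 1 - q 1| ≤ 1 ∧ |p 0 + p 1 - (q 0 + q 1)| ≤ 1) :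
    ∃ v, S ⊆ (v + ·) '' triangle₃ ∨ S ⊆ (v + ·) '' triangle₄ := by
  obtain ⟨m₀, hm₀⟩ := exists_forall_mem_Icc_of_abs_sub_le_one (fun p : Fin 2 → ℤ => p 0)
    (s := S) fun p hp q hq => (h p hp q hq).1
  obtain ⟨m₁, hm₁⟩ := exists_forall_mem_Icc_of_abs_sub_le_one (fun p : Fin 2 → ℤ => p 1)
    (s := S) fun p hp q hq => (h p hp q hq).2.1
  obtain ⟨m, hm⟩ := exists_forall_mem_Icc_of_abs_sub_le_one (fun p : Fin 2 → ℤ => p 0 + p 1)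
    (s := S) fun p hp q hq => (h p hp q hq).2.2
  refine ⟨![m₀, m₁], ?_⟩
  simp only [image_add_left, subset_def, mem_preimage, mem_triangle₃_iff, mem_triangle₄_iff,
    Pi.add_apply, Pi.neg_apply, Matrix.cons_val_zero, Matrix.cons_val_one]
  rcases le_or_gt m (m₀ + m₁) with hle | hgt
  · left
    intro p hp
    have := hm₀ p hp; have := hm₁ p hp; have := hm p hp
    omega
  · right
    intro p hp
    have := hm₀ p hp; have := hm₁ p hp; have := hm p hp
    omega

section MatrixV2

variable {r₁ r₂ r₃ : ℝ}

def matrixV2 (r₁ r₂ r₃ : ℝ) : Matrix (Fin 2) (Fin 2) ℝ :=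
  r₁ • !![(1:ℝ), 0; 0, 1] + r₂ • !![(0:ℝ), 0; 0, 1] + r₃ • !![(1:ℝ), 1; 1, 1]

lemma matrixV2_eq : matrixV2 r₁ r₂ r₃ = !![r₁ + r₃, r₃; r₃, r₁ + r₂ + r₃] := by
  ext i j
  fin_cases i <;> fin_cases j <;> simp [matrixV2]

lemma matrixV2_isSymm : (matrixV2 r₁ r₂ r₃).IsSymm := by
  rw [matrixV2_eq]
  exact IsSymm.ext fun i j => by fin_cases i <;> fin_cases j <;> rfl

lemma dotProduct_matrixV2_mulVec (x y : Fin 2 → ℝ) :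
    x ⬝ᵥ matrixV2 r₁ r₂ r₃ *ᵥ y =
      r₁ * (x 0 * y 0) + (r₁ + r₂) * (x 1 * y 1) + r₃ * ((x 0 + x 1) * (y 0 + y 1)) := by
  simp only [matrixV2_eq, mulVec, vec2_dotProduct, of_apply, cons_val_zero, cons_val_one]
  ring

lemma det_matrixV2 : (matrixV2 r₁ r₂ r₃).det = r₁ ^ 2 + r₁ * r₂ + 2 * r₁ * r₃ + r₂ * r₃ := by
  rw [matrixV2_eq, det_fin_two_of]
  ring

variable (h₁ : 0 < r₁) (h₂ : 0 < r₂) (h₃ : 0 < r₃)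
include h₁ h₂ h₃

lemma abs_sub_le_one_of_mem_nearestPts_matrixV2 {α : Fin 2 → ℝ} {p q : Fin 2 → ℤ}
    (hp : p ∈ nearestPts (matrixV2 r₁ r₂ r₃) α) (hq : q ∈ nearestPts (matrixV2 r₁ r₂ r₃) α) :
    |p 0 - q 0| ≤ 1 ∧ |p 1 - q 1| ≤ 1 ∧ |p 0 + p 1 - (q 0 + q 1)| ≤ 1 := by
  have h := fun a b : ℤ =>
    dotProduct_mulVec_nonpos_of_mem_nearestPts matrixV2_isSymm hp hq ![a, b]
  simp only [dotProduct_matrixV2_mulVec] at h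
  rw [show p 0 + p 1 - (q 0 + q 1) = p 0 - q 0 + (p 1 - q 1) by ring]
  refine abs_le_one_of_forall_pairing_nonpos h₁ (add_pos h₁ h₂) h₃ fun a b => ?_
  have := h a b
  simp only [castVec_apply, Pi.sub_apply, cons_val_zero, cons_val_one] at this
  push_cast at this ⊢
  linear_combination this

lemma exists_nearestPts_matrixV2_eq_triangle₃ :
    ∃ α, nearestPts (matrixV2 r₁ r₂ r₃) α = triangle₃ := by
  have hdet : IsUnit (matrixV2 r₁ r₂ r₃).det := by
    rw [det_matrixV2]; exact (by positivity : (0 : ℝ) < _).ne'.isUnit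
  -- half the diagonal of the matrix: `α` is equidistant from `0`, `s₁` and `s₂`
  obtain ⟨α, hα⟩ := mulVec_surjective_iff_isUnit.2 ((isUnit_iff_isUnit_det _).2 hdet)
    ![(r₁ + r₃) / 2, (r₁ + r₂ + r₃) / 2]
  have hdist (b : Fin 2 → ℤ) :
      (castVec b - α) ⬝ᵥ matrixV2 r₁ r₂ r₃ *ᵥ (castVec b - α) =
        α ⬝ᵥ matrixV2 r₁ r₂ r₃ *ᵥ α + triangleGap r₁ (r₁ + r₂) r₃ (b 0) (b 1) := by
    rw [sub_eq_add_neg, add_dotProduct_mulVec_add matrixV2_isSymm]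
    simp only [mulVec_neg, dotProduct_neg, neg_dotProduct, neg_neg]
    rw [hα, dotProduct_matrixV2_mulVec]
    simp only [vec2_dotProduct, castVec_apply, cons_val_zero, cons_val_one, triangleGap]
    ring
  refine ⟨α, Set.ext fun p => ?_⟩
  simp only [nearestPts, mem_ofPred_eq, hdist, add_le_add_iff_left, mem_triangle₃_iff]
  rw [← triangleGap_nonpos_iff h₁ (add_pos h₁ h₂) h₃]
  refine ⟨fun h => by simpa [triangleGap] using h 0, fun h q => h.trans ?_⟩
  exact triangleGap_nonneg h₁.le (add_pos h₁ h₂).le h₃.le _ _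

lemma exists_nearestPts_matrixV2_eq_triangle₄ :
    ∃ α, nearestPts (matrixV2 r₁ r₂ r₃) α = triangle₄ := by
  obtain ⟨α, hα⟩ := exists_nearestPts_matrixV2_eq_triangle₃ h₁ h₂ h₃
  exact ⟨castVec (Pi.single 0 1 + Pi.single 1 1) - α, by
    rw [nearestPts_castVec_sub, hα, triangle₄_eq_preimage]⟩

end MatrixV2

lemma convexHull_castVec_image_eq_zTrans {S : Set (Fin 2 → ℤ)} {v a b c : Fin 2 → ℤ}
    (hS : S ⊆ (v + ·) '' {a, b, c}) (h : affineSpan ℝ (castVec '' S) = ⊤) :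
    convexHull ℝ (castVec '' S) = zTrans v (convexHull ℝ (castVec '' {a, b, c})) := by
  rw [zTrans_convexHull_castVec_image]
  congr 1
  simp only [image_insert_eq, image_singleton] at hS ⊢
  have := image_mono (f := castVec) hS
  simp only [image_insert_eq, image_singleton] at this
  exact eq_of_subset_triple_of_affineSpan_eq_top (by simp) this h

lemma affineSpan_castVec_image_translate_triangle₃ (v : Fin 2 → ℤ) :
    affineSpan ℝ (castVec '' ((v + ·) '' triangle₃)) = ⊤ := by
  refine affineSpan_castVec_image_translate_eq_top v ⟨0, by simp [triangle₃]⟩ fun i => ?_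
  exact ⟨Pi.single i 1, by fin_cases i <;> simp [triangle₃], 0, by simp [triangle₃], sub_zero _⟩

lemma affineSpan_castVec_image_translate_triangle₄ (v : Fin 2 → ℤ) :
    affineSpan ℝ (castVec '' ((v + ·) '' triangle₄)) = ⊤ := by
  refine affineSpan_castVec_image_translate_eq_top v ⟨Pi.single 0 1, by simp [triangle₄]⟩ fun i => ?_
  refine ⟨Pi.single 0 1 + Pi.single 1 1, by simp [triangle₄], ?_⟩
  fin_cases i
  · exact ⟨Pi.single 1 1, by simp [triangle₄], add_sub_cancel_right _ _⟩
  · exact ⟨Pi.single 0 1, by simp [triangle₄], add_sub_cancel_left _ _⟩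

/-- For `B = r₁·[[1,0],[0,1]] + r₂·[[0,0],[0,1]] + r₃·[[1,1],[1,1]]` with
`r₁, r₂, r₃ > 0`, the 2-dimensional Delaunay cells are exactly the `ℤ²`-translates of
`σ₃ = conv{0, s₁, s₂}` and `σ₄ = conv{s₁, s₂, s₁+s₂}`. -/
theorem delaunay_cells_V2_dim_two
    (r₁ r₂ r₃ : ℝ) (h₁ : 0 < r₁) (h₂ : 0 < r₂) (h₃ : 0 < r₃) :
    ∀ σ : Set (Fin 2 → ℝ),
      (IsDelaunayCell
        (fun x y => x ⬝ᵥ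
          ((r₁ • !![(1:ℝ), 0; 0, 1] + r₂ • !![(0:ℝ), 0; 0, 1]
            + r₃ • !![(1:ℝ), 1; 1, 1]).mulVec y)) σ ∧
        affineSpan ℝ σ = ⊤) ↔
      ∃ v : Fin 2 → ℤ,
        σ = zTrans v (convexHull ℝ
              {(0 : Fin 2 → ℝ), stdV 2 0, stdV 2 1}) ∨
        σ = zTrans v (convexHull ℝ
              {stdV 2 0, stdV 2 1, stdV 2 0 + stdV 2 1}) := by
  intro σ
  rw [← castVec_image_triangle₃, ← castVec_image_triangle₄]
  change IsDelaunayCell (fun x y => x ⬝ᵥ matrixV2 r₁ r₂ r₃ *ᵥ y) σ ∧ _ ↔ _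
  rw [isDelaunayCell_iff]
  constructor
  · rintro ⟨⟨α, rfl⟩, hspan⟩
    rw [affineSpan_convexHull] at hspan
    obtain ⟨v, hv | hv⟩ := exists_subset_translate_triangle fun p hp q hq =>
      abs_sub_le_one_of_mem_nearestPts_matrixV2 h₁ h₂ h₃ hp hq
    · exact ⟨v, Or.inl (convexHull_castVec_image_eq_zTrans hv hspan)⟩
    · exact ⟨v, Or.inr (convexHull_castVec_image_eq_zTrans hv hspan)⟩
  · rintro ⟨v, rfl | rfl⟩ <;> rw [zTrans_convexHull_castVec_image, affineSpan_convexHull]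
    · obtain ⟨α, hα⟩ := exists_nearestPts_matrixV2_eq_triangle₃ h₁ h₂ h₃
      exact ⟨⟨castVec v + α, by rw [nearestPts_castVec_add, hα]⟩,
        affineSpan_castVec_image_translate_triangle₃ v⟩
    · obtain ⟨α, hα⟩ := exists_nearestPts_matrixV2_eq_triangle₄ h₁ h₂ h₃
      exact ⟨⟨castVec v + α, by rw [nearestPts_castVec_add, hα]⟩,
        affineSpan_castVec_image_translate_triangle₄ v⟩
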